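/- Let (M_n)_{n≥1} be a sequence of non-singular integer d×d matrices satisfying: for all nonzero j ∈ ℤ^d, all n ∈ ℕ, and all k ≥ log_q(‖j‖_∞), one has ‖M_{n+k}^T j‖_∞ ≥ q^k ‖M_n^T‖_∞ for some fixed q > 1. Then for any n, n' ∈ ℕ, any G ≥ 2, and any j ∈ ℤ^d with ‖j‖_∞ ≤ G, there exists at most one j' ∈ ℤ^d with ‖j'‖_∞ ≤ G such that ‖M_n^T j + M_{n'}^T j'‖_∞ < ‖M_{n''}^T‖_∞, where n'' ≤ min(n, n') − log_q(G); similarly at most one j' satisfies this with the minus sign. -/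

import Mathlib

/-- The maximum norm `‖v‖_∞` of an integer vector, as a real number. -/
noncomputable def vecNorm {d : ℕ} (v : Fin d → ℤ) : ℝ :=
  ((Finset.univ.sup fun i => (v i).natAbs : ℕ) : ℝ)

/-- The `ℓ∞`-operator norm (maximum absolute row sum) of an integer matrix. -/
noncomputable def matNorm {d : ℕ} (M : Matrix (Fin d) (Fin d) ℤ) : ℝ :=
  ((Finset.univ.sup fun i => ∑ k, (M i k).natAbs : ℕ) : ℝ)

/-- The Hadamard gap condition: `‖M_{n+k}^T j‖_∞ ≥ q^k ‖M_n^T‖_∞` for all nonzero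
`j ∈ ℤ^d`, all `n`, and all `k ≥ log_q ‖j‖_∞`. -/
def HadamardGap {d : ℕ} (q : ℝ) (M : ℕ → Matrix (Fin d) (Fin d) ℤ) : Prop :=
  ∀ (j : Fin d → ℤ), j ≠ 0 → ∀ n k : ℕ, Real.logb q (vecNorm j) ≤ (k : ℝ) →
    q ^ k * matNorm (M n).transpose ≤ vecNorm ((M (n + k)).transpose.mulVec j)

/-!
For `k = 0` the gap condition says that every column of `A = M_nᵀ` has sup norm at least the
maximal absolute row sum `‖A‖`. A row containing an entry that large has no other nonzero entry,
so `‖A v‖_∞ ≥ ‖A‖` for every nonzero integer vector `v`. Two distinct solutions `j₁, j₂` would give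
`‖M_{n'}ᵀ (j₁ - j₂)‖_∞ < 2 ‖M_{n''}ᵀ‖`, while the gap condition from `n''` to `n'`, applied to a
unit vector, gives `‖M_{n'}ᵀ‖ ≥ q^(n' - n'') ‖M_{n''}ᵀ‖ ≥ G ‖M_{n''}ᵀ‖ ≥ 2 ‖M_{n''}ᵀ‖`.
-/

open Matrix

attribute [local instance] Matrix.linftyOpSeminormedAddCommGroup

lemma vecNorm_eq_norm {d : ℕ} (v : Fin d → ℤ) : vecNorm v = ‖v‖ := by
  rw [vecNorm, Pi.norm_def, ← NNReal.coe_natCast, Nat.cast_finsetSup]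
  simp only [NNReal.natCast_natAbs]

lemma matNorm_eq_norm {d : ℕ} (A : Matrix (Fin d) (Fin d) ℤ) : matNorm A = ‖A‖ := by
  rw [matNorm, Matrix.linfty_opNorm_def, ← NNReal.coe_natCast, Nat.cast_finsetSup]
  simp only [Nat.cast_sum, NNReal.natCast_natAbs]

namespace Matrix

lemma sum_norm_le_linfty_opNorm {m n α : Type*} [Fintype m] [Fintype n]
    [SeminormedAddCommGroup α] (A : Matrix m n α) (i : m) : ∑ l, ‖A i l‖ ≤ ‖A‖ := by
  rw [linfty_opNorm_def]
  simp only [← coe_nnnorm, ← NNReal.coe_sum, NNReal.coe_le_coe]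
  exact Finset.le_sup (f := fun i => ∑ l, ‖A i l‖₊) (Finset.mem_univ i)

lemma mulVec_apply_eq_of_sum_norm_le {m n : Type*} [Fintype n] [DecidableEq n]
    (A : Matrix m n ℤ) (v : n → ℤ) {i : m} {k : n} (h : ∑ l, ‖A i l‖ ≤ ‖A i k‖) :
    (A *ᵥ v) i = A i k * v k := by
  rw [← Finset.add_sum_erase _ _ (Finset.mem_univ k), add_le_iff_nonpos_right] at h
  have hzero : ∀ l ≠ k, A i l = 0 := fun l hl => norm_eq_zero.mp <|
    (Finset.sum_eq_zero_iff_of_nonneg (fun _ _ => norm_nonneg _)).mp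
      (le_antisymm h (Finset.sum_nonneg fun _ _ => norm_nonneg _)) l (by simp [hl])
  exact Finset.sum_eq_single k (fun l _ hl => by simp [hzero l hl]) (by simp)

/-- If every column attains the row-sum norm, then for a nonzero entry `v k` some row of `A` is
concentrated on column `k`, and in that row `A *ᵥ v` is a nonzero multiple of `A i k`. -/
lemma linfty_opNorm_le_norm_mulVec {m n : Type*} [Fintype m] [Fintype n] [DecidableEq n]
    (A : Matrix m n ℤ) (hcol : ∀ k, ‖A‖ ≤ ‖A.col k‖) {v : n → ℤ} (hv : v ≠ 0) : ‖A‖ ≤ ‖A *ᵥ v‖ := by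
  obtain ⟨k, hk⟩ := Function.ne_iff.mp hv
  rcases isEmpty_or_nonempty m with hm | hm
  · simp [Subsingleton.elim A 0]
  obtain ⟨i, -, hi⟩ := Finset.exists_mem_eq_sup Finset.univ Finset.univ_nonempty
    fun i => ‖A.col k i‖₊
  have hAik : ‖A‖ ≤ ‖A i k‖ := by
    have := hcol k
    rwa [Pi.norm_def, hi] at this
  have hvk : 1 ≤ ‖v k‖ := by
    rw [Int.norm_eq_abs]
    exact_mod_cast Int.one_le_abs hk
  calc ‖A‖ ≤ ‖A i k‖ * ‖v k‖ := hAik.trans (le_mul_of_one_le_right (norm_nonneg _) hvk)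
    _ = ‖(A *ᵥ v) i‖ := by
        rw [mulVec_apply_eq_of_sum_norm_le A v ((sum_norm_le_linfty_opNorm A i).trans hAik),
          norm_mul]
    _ ≤ ‖A *ᵥ v‖ := norm_le_pi_norm _ i

lemma norm_col_le_linfty_opNorm {m n α : Type*} [Fintype m] [Fintype n] [DecidableEq n]
    [NormedRing α] [NormOneClass α] (A : Matrix m n α) (k : n) : ‖A.col k‖ ≤ ‖A‖ := by
  have := linfty_opNorm_mulVec A (Pi.single k 1)
  rwa [mulVec_single_one, Pi.norm_single, norm_one, mul_one] at this

end Matrix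

namespace HadamardGap

variable {d : ℕ} {q : ℝ} {M : ℕ → Matrix (Fin d) (Fin d) ℤ}

lemma linfty_opNorm_le_norm_col (hgap : HadamardGap q M) (n : ℕ) (k : Fin d) :
    ‖(M n)ᵀ‖ ≤ ‖(M n)ᵀ.col k‖ := by
  have h := hgap (Pi.single k 1) (Pi.single_ne_zero_iff.mpr one_ne_zero) n 0
    (by simp [vecNorm_eq_norm, Pi.norm_single])
  rwa [pow_zero, one_mul, add_zero, vecNorm_eq_norm, matNorm_eq_norm, mulVec_single_one] at h

lemma linfty_opNorm_le_norm_mulVec (hgap : HadamardGap q M) (n : ℕ) {v : Fin d → ℤ}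
    (hv : v ≠ 0) : ‖(M n)ᵀ‖ ≤ ‖(M n)ᵀ *ᵥ v‖ :=
  (M n)ᵀ.linfty_opNorm_le_norm_mulVec (hgap.linfty_opNorm_le_norm_col n) hv

lemma pow_mul_linfty_opNorm_le [Nonempty (Fin d)] (hgap : HadamardGap q M) (n k : ℕ) :
    q ^ k * ‖(M n)ᵀ‖ ≤ ‖(M (n + k))ᵀ‖ := by
  let i : Fin d := Classical.arbitrary _
  have h := hgap (Pi.single i 1) (Pi.single_ne_zero_iff.mpr one_ne_zero) n k
    (by simp [vecNorm_eq_norm, Pi.norm_single])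
  rw [vecNorm_eq_norm, matNorm_eq_norm, mulVec_single_one] at h
  exact h.trans ((M (n + k))ᵀ.norm_col_le_linfty_opNorm i)

end HadamardGap

lemma Real.exists_eq_add_and_le_pow_of_le_sub_logb {q x : ℝ} (hq : 1 < q) (hx : 1 ≤ x) {m n : ℕ}
    (h : (m : ℝ) ≤ n - Real.logb q x) : ∃ k : ℕ, n = m + k ∧ x ≤ q ^ k := by
  have hlog : 0 ≤ Real.logb q x := Real.logb_nonneg hq hx
  obtain ⟨k, rfl⟩ := Nat.exists_eq_add_of_le (by exact_mod_cast (by linarith : (m : ℝ) ≤ n))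
  refine ⟨k, rfl, ?_⟩
  rw [← Real.rpow_natCast, ← Real.logb_le_iff_le_rpow hq (by linarith)]
  push_cast at h
  linarith

theorem diophantine_unique_solution_general {d : ℕ} (q : ℝ) (hq : 1 < q)
    (M : ℕ → Matrix (Fin d) (Fin d) ℤ)
    (hgap : HadamardGap q M)
    (n n' n'' : ℕ) (G : ℕ) (hG : 2 ≤ G)
    (hn'' : (n'' : ℝ) ≤ min (n : ℝ) (n' : ℝ) - Real.logb q (G : ℝ))
    (j : Fin d → ℤ)
    (ε : ℤ) (hε : ε = 1 ∨ ε = -1) :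
    ∀ j₁ j₂ : Fin d → ℤ, vecNorm j₁ ≤ (G : ℝ) → vecNorm j₂ ≤ (G : ℝ) →
      vecNorm ((M n).transpose.mulVec j + ε • (M n').transpose.mulVec j₁)
        < matNorm (M n'').transpose →
      vecNorm ((M n).transpose.mulVec j + ε • (M n').transpose.mulVec j₂)
        < matNorm (M n'').transpose →
      j₁ = j₂ := by
  intro j₁ j₂ _ _ hj₁ hj₂
  rcases isEmpty_or_nonempty (Fin d) with hd | hd
  · exact Subsingleton.elim _ _
  rw [vecNorm_eq_norm, matNorm_eq_norm] at hj₁ hj₂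
  have hG' : (2 : ℝ) ≤ G := by exact_mod_cast hG
  obtain ⟨k, rfl, hGk⟩ := Real.exists_eq_add_and_le_pow_of_le_sub_logb (x := G) hq (by linarith)
    (hn''.trans (by gcongr; exact min_le_right _ _))
  by_contra hne
  set A := (M (n'' + k))ᵀ
  have hlower : 2 * ‖(M n'')ᵀ‖ ≤ ‖A *ᵥ (j₁ - j₂)‖ :=
    calc 2 * ‖(M n'')ᵀ‖ ≤ q ^ k * ‖(M n'')ᵀ‖ := by gcongr; linarith
      _ ≤ ‖A‖ := hgap.pow_mul_linfty_opNorm_le n'' k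
      _ ≤ ‖A *ᵥ (j₁ - j₂)‖ := hgap.linfty_opNorm_le_norm_mulVec _ (sub_ne_zero.mpr hne)
  have hε1 : ‖ε‖ = 1 := by rcases hε with rfl | rfl <;> simp
  have hupper : ‖A *ᵥ (j₁ - j₂)‖ < 2 * ‖(M n'')ᵀ‖ :=
    calc ‖A *ᵥ (j₁ - j₂)‖
        = ‖((M n)ᵀ *ᵥ j + ε • A *ᵥ j₁) - ((M n)ᵀ *ᵥ j + ε • A *ᵥ j₂)‖ := by
          rw [add_sub_add_left_eq_sub, ← smul_sub, ← mulVec_sub, norm_smul, hε1, one_mul]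
      _ ≤ ‖(M n)ᵀ *ᵥ j + ε • A *ᵥ j₁‖ + ‖(M n)ᵀ *ᵥ j + ε • A *ᵥ j₂‖ := norm_sub_le _ _
      _ < 2 * ‖(M n'')ᵀ‖ := by linarith
  linarith

theorem diophantine_unique_solution {d : ℕ} (q : ℝ) (hq : 1 < q)
    (M : ℕ → Matrix (Fin d) (Fin d) ℤ) (hdet : ∀ n, (M n).det ≠ 0)
    (hgap : HadamardGap q M)
    (n n' n'' : ℕ) (G : ℕ) (hG : 2 ≤ G)
    (hn'' : (n'' : ℝ) ≤ min (n : ℝ) (n' : ℝ) - Real.logb q (G : ℝ))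
    (j : Fin d → ℤ) (hj : vecNorm j ≤ (G : ℝ))
    (ε : ℤ) (hε : ε = 1 ∨ ε = -1) :
    ∀ j₁ j₂ : Fin d → ℤ, vecNorm j₁ ≤ (G : ℝ) → vecNorm j₂ ≤ (G : ℝ) →
      vecNorm ((M n).transpose.mulVec j + ε • (M n').transpose.mulVec j₁)
        < matNorm (M n'').transpose →
      vecNorm ((M n).transpose.mulVec j + ε • (M n').transpose.mulVec j₂)
        < matNorm (M n'').transpose →
      j₁ = j₂ :=
  diophantine_unique_solution_general q hq M hgap n n' n'' G hG hn'' j ε hε
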